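/- For the sorted-threshold simplex projection: let μ₁ ≥ μ₂ ≥ ... ≥ μ_N be the entries of v ∈ ℝ^N sorted in descending order, let ρ = max{ j : μ_j - (1/j)(∑_{i=1}^j μ_i - z) > 0 } and θ = (1/ρ)(∑_{i=1}^ρ μ_i - z). Then w with w_i = max(v_i - θ, 0) is the Euclidean projection of v onto the simplex {x ∈ ℝ^N : x ≥ 0, ∑ x_i = z}, i.e., w minimizes ‖x - v‖₂ over that set. -/

import Mathlib

/-!
The vector `w = max (v - θ) 0` satisfies the optimality conditions of the projection: `v - w`
equals `θ` on the support of `w` and is at most `θ` off it, so for every feasible `x` we get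
`⟪x - w, v - w⟫ ≤ θ (∑ x - ∑ w) = 0`, which is the variational inequality characterising the
projection onto a convex set. It remains to see that `∑ w = z`: by the choice of `ρ` and since
`μ` is sorted, `μ i > θ` exactly for the first `ρ` entries, so `∑ w = ∑_{i<ρ} μ i - ρ θ = z`.
-/

open Finset

section Threshold

variable {ι : Type*} [Fintype ι]

theorem sum_max_sub_zero_eq_sum_sub (f : ι → ℝ) (θ : ℝ) (s : Finset ι)
    (hs : ∀ i ∈ s, θ ≤ f i) (hsc : ∀ i ∉ s, f i ≤ θ) :
    ∑ i, max (f i - θ) 0 = ∑ i ∈ s, (f i - θ) :=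
  calc ∑ i, max (f i - θ) 0 = ∑ i ∈ s, max (f i - θ) 0 :=
        (sum_subset (subset_univ s) fun i _ hi => max_eq_right (sub_nonpos.2 (hsc i hi))).symm
    _ = ∑ i ∈ s, (f i - θ) := sum_congr rfl fun i hi => max_eq_left (sub_nonneg.2 (hs i hi))

theorem sub_mul_sub_max_sub_zero_le (a θ x : ℝ) (hx : 0 ≤ x) :
    (x - max (a - θ) 0) * (a - max (a - θ) 0) ≤ θ * (x - max (a - θ) 0) := by
  rcases le_total (a - θ) 0 with h | h
  · rw [max_eq_right h]
    nlinarith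
  · rw [max_eq_left h]
    linarith

theorem sum_sq_max_sub_zero_sub_le (v x : ι → ℝ) (θ : ℝ) (hx : ∀ i, 0 ≤ x i)
    (hsum : ∑ i, x i = ∑ i, max (v i - θ) 0) :
    ∑ i, (max (v i - θ) 0 - v i) ^ 2 ≤ ∑ i, (x i - v i) ^ 2 := by
  set w := fun i => max (v i - θ) 0
  have hinner : ∑ i, (x i - w i) * (v i - w i) ≤ 0 :=
    calc ∑ i, (x i - w i) * (v i - w i) ≤ ∑ i, θ * (x i - w i) :=
          sum_le_sum fun i _ => sub_mul_sub_max_sub_zero_le (v i) θ (x i) (hx i)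
      _ = 0 := by rw [← mul_sum, sum_sub_distrib, hsum, sub_self, mul_zero]
  have hexpand : ∑ i, (x i - v i) ^ 2 - ∑ i, (w i - v i) ^ 2
      = ∑ i, (x i - w i) ^ 2 - 2 * ∑ i, (x i - w i) * (v i - w i) := by
    rw [mul_sum, ← sum_sub_distrib, ← sum_sub_distrib]
    exact sum_congr rfl fun i _ => by ring
  linarith [sum_nonneg fun i (_ : i ∈ univ) => sq_nonneg (x i - w i)]

end Threshold

section Sorted

variable {N : ℕ} (μ : Fin N → ℝ)

def prefixSum (j : ℕ) : ℝ :=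
  ∑ i ∈ univ.filter (fun i : Fin N => (i : ℕ) < j), μ i

theorem prefixSum_succ {j : ℕ} (hj : j < N) :
    prefixSum μ (j + 1) = prefixSum μ j + μ ⟨j, hj⟩ := by
  have hinsert : univ.filter (fun i : Fin N => (i : ℕ) < j + 1)
      = insert ⟨j, hj⟩ (univ.filter (fun i : Fin N => (i : ℕ) < j)) := by
    ext i
    simp only [mem_filter, mem_univ, true_and, mem_insert, Fin.ext_iff]
    omega
  rw [prefixSum, hinsert, sum_insert (by simp), add_comm]
  rfl

theorem sum_max_sub_zero_eq_prefixSum_sub {ρ : ℕ} (hρN : ρ ≤ N) {θ : ℝ}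
    (h_lt : ∀ i : Fin N, (i : ℕ) < ρ → θ ≤ μ i) (h_ge : ∀ i : Fin N, ρ ≤ (i : ℕ) → μ i ≤ θ) :
    ∑ i, max (μ i - θ) 0 = prefixSum μ ρ - ρ * θ := by
  rw [sum_max_sub_zero_eq_sum_sub μ θ _ (fun i hi => h_lt i (mem_filter.1 hi).2)
      (fun i hi => h_ge i (not_lt.1 fun h => hi (mem_filter.2 ⟨mem_univ i, h⟩))),
    sum_sub_distrib, sum_const, Fin.card_filter_val_lt, min_eq_right hρN, nsmul_eq_mul]
  rfl

theorem le_of_sub_one_div_succ_mul_nonpos {a s r : ℝ} (hr : 0 < r)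
    (h : a - 1 / (r + 1) * (s + a) ≤ 0) : a ≤ 1 / r * s := by
  rw [one_div_mul_eq_div, sub_nonpos, le_div_iff₀ (by positivity)] at h
  rw [one_div_mul_eq_div, le_div_iff₀ hr]
  linarith

theorem le_threshold_of_not_pos_succ (hμ : Antitone μ) {ρ : ℕ} (hρ1 : 1 ≤ ρ) (hρN : ρ < N)
    (z : ℝ) (h : ¬ 0 < μ ⟨ρ, hρN⟩ - 1 / ((ρ + 1 : ℕ) : ℝ) * (prefixSum μ (ρ + 1) - z))
    (i : Fin N) (hi : ρ ≤ (i : ℕ)) :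
    μ i ≤ 1 / (ρ : ℝ) * (prefixSum μ ρ - z) := by
  rw [not_lt, prefixSum_succ μ hρN, Nat.cast_succ, add_sub_right_comm] at h
  exact (hμ (Fin.le_def.2 hi)).trans
    (le_of_sub_one_div_succ_mul_nonpos (by exact_mod_cast hρ1) h)

end Sorted

theorem simplex_projection_correct (N : ℕ) (z : ℝ)
    (v μ : Fin N → ℝ)
    (hperm : ∃ e : Equiv.Perm (Fin N), ∀ i, μ i = v (e i))
    (hsorted : ∀ i j : Fin N, i ≤ j → μ j ≤ μ i)
    (S : ℕ → ℝ)
    (hS : ∀ j, S j = ∑ i ∈ Finset.univ.filter (fun i : Fin N => (i : ℕ) < j), μ i)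
    (ρ : ℕ) (hρ1 : 1 ≤ ρ) (hρN : ρ ≤ N)
    (hρpos : 0 < μ ⟨ρ - 1, by omega⟩ - (1 / (ρ : ℝ)) * (S ρ - z))
    (hρmax : ∀ j, (h1 : 1 ≤ j) → (hN : j ≤ N) →
      0 < μ ⟨j - 1, by omega⟩ - (1 / (j : ℝ)) * (S j - z) → j ≤ ρ)
    (θ : ℝ) (hθ : θ = (1 / (ρ : ℝ)) * (S ρ - z))
    (w : Fin N → ℝ) (hw : ∀ i, w i = max (v i - θ) 0) :
    (∀ i, 0 ≤ w i) ∧ (∑ i, w i = z) ∧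
      ∀ x : Fin N → ℝ, (∀ i, 0 ≤ x i) → (∑ i, x i = z) →
        ∑ i, (w i - v i) ^ 2 ≤ ∑ i, (x i - v i) ^ 2 := by
  obtain rfl : S = prefixSum μ := funext hS
  obtain rfl : w = fun i => max (v i - θ) 0 := funext hw
  obtain ⟨e, he⟩ := hperm
  have hμ : Antitone μ := fun i j hij => hsorted i j hij
  have h_lt (i : Fin N) (hi : (i : ℕ) < ρ) : θ ≤ μ i :=
    hθ ▸ (sub_pos.1 hρpos).le.trans (hμ (Fin.le_def.2 (by dsimp only; omega)))
  have h_ge (i : Fin N) (hi : ρ ≤ (i : ℕ)) : μ i ≤ θ := by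
    have hρN' : ρ < N := hi.trans_lt i.isLt
    exact hθ ▸ le_threshold_of_not_pos_succ μ hμ hρ1 hρN' z
      (fun h => absurd (hρmax (ρ + 1) (by omega) hρN' h) (by omega)) i hi
  have hwz : ∑ i, max (v i - θ) 0 = z := by
    have hρ : (ρ : ℝ) ≠ 0 := Nat.cast_ne_zero.2 (by omega)
    rw [← Equiv.sum_comp e (fun i => max (v i - θ) 0)]
    simp_rw [← he]
    rw [sum_max_sub_zero_eq_prefixSum_sub μ hρN h_lt h_ge, hθ]
    field_simp
    ring
  exact ⟨fun i => le_max_right _ _, hwz,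
    fun x hx hxz => sum_sq_max_sub_zero_sub_le v x θ hx (hxz.trans hwz.symm)⟩
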